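/- Let g be a Schwartz function on ℝⁿ. (a) For every ε > 0 and every α ∈ ℂ, the integral I_ε(α) := ∫_{ℝⁿ} g(x) ∏_{i=1}^n (x_i² + ε)^{−α} ω^B(x) dx converges absolutely, and α ↦ I_ε(α) is an entire function. (b) If Re α < k' + 1/2, then the integral ∫_{ℝⁿ} g(x) ∏_{i=1}^n (x_i²)^{−α} ω^B(x) dx converges absolutely and lim_{ε→0⁺} I_ε(α) = ∫_{ℝⁿ} g(x) ∏_{i=1}^n (x_i²)^{−α} ω^B(x) dx. -/

import Mathlib

/-!
For `ε > 0` the regularising factor is `Y ^ (-α)` with `Y = ∏ᵢ (xᵢ² + ε)`, and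
`εⁿ ≤ Y ≤ ((1 + ε)(1 + ‖x‖)²)ⁿ`. Hence this factor and its `α`-derivative `-log Y · Y ^ (-α)`
grow at most polynomially in `x`, locally uniformly in `α`; so does `ω^B`, and the rapid decay
of `g` gives absolute convergence and, by differentiation under the integral sign, holomorphy.

For `ε ∈ [0, 1]` and `a = Re α < k' + 1/2`, each coordinate satisfies
`(t² + ε)^(-a) |t|^(2k') ≤ |t|^(2k' - 2a) + (1 + |t|)^(2k' + 2|a|)` with `2k' - 2a > -1`, while
the decay of `g` can be spread over the coordinates as `∏ᵢ (1 + |xᵢ|)^(-M)`. This yields an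
integrable dominating function of product form, independent of `ε`, and dominated convergence
gives the limit as `ε → 0⁺`.
-/

noncomputable section

open MeasureTheory Real Filter

/-- The type-B weight `ω^B(x) = ∏_i |x_i|^{2k'} ∏_{i<j} |x_i² - x_j²|^{2k}`. -/
def weightB (n : ℕ) (k k' : ℝ) (x : Fin n → ℝ) : ℝ :=
  (∏ i : Fin n, |x i| ^ (2 * k')) *
    ∏ i : Fin n, ∏ j ∈ Finset.Ioi i, |x i ^ 2 - x j ^ 2| ^ (2 * k)

/-- The regularized integral `I_ε(α) = ∫ g(x) ∏ᵢ (xᵢ²+ε)^{-α} ω^B(x) dx`. -/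
def regZeta (n : ℕ) (k k' : ℝ) (g : SchwartzMap (Fin n → ℝ) ℂ)
    (ε : ℝ) (α : ℂ) : ℂ :=
  ∫ x : Fin n → ℝ,
    g x * (∏ i, ((x i ^ 2 + ε : ℝ) : ℂ) ^ (-α)) * ((weightB n k k' x : ℝ) : ℂ)

open Topology

theorem rpow_le_rpow_add_rpow_neg {t b c : ℝ} (ht : 0 < t) (hc : |c| ≤ b) :
    t ^ c ≤ t ^ b + t ^ (-b) := by
  rcases le_total 1 t with h | h
  · exact (rpow_le_rpow_of_exponent_le h ((le_abs_self c).trans hc)).trans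
      (le_add_of_nonneg_right (by positivity))
  · exact (rpow_le_rpow_of_exponent_ge ht h (by linarith [neg_abs_le c])).trans
      (le_add_of_nonneg_left (by positivity))

theorem abs_log_mul_rpow_le {y b c : ℝ} (hy : 0 < y) (hc : |c| ≤ b) :
    |log y| * y ^ c ≤ y ^ (b + 1) + y ^ (-(b + 1)) := by
  rcases le_total 1 y with h | h
  · have hlog : |log y| ≤ y := by
      rw [abs_of_nonneg (log_nonneg h)]
      exact log_le_self hy.le
    have hpow : y ^ c ≤ y ^ b := rpow_le_rpow_of_exponent_le h ((le_abs_self c).trans hc)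
    calc |log y| * y ^ c ≤ y * y ^ b := mul_le_mul hlog hpow (by positivity) hy.le
      _ = y ^ (b + 1) := by rw [rpow_add hy, rpow_one, mul_comm]
      _ ≤ _ := le_add_of_nonneg_right (by positivity)
  · have hlog : |log y| ≤ y⁻¹ := by
      rw [abs_of_nonpos (log_nonpos hy.le h), ← log_inv]
      exact log_le_self (by positivity)
    have hpow : y ^ c ≤ y ^ (-b) := rpow_le_rpow_of_exponent_ge hy h (by linarith [neg_abs_le c])
    calc |log y| * y ^ c ≤ y⁻¹ * y ^ (-b) := mul_le_mul hlog hpow (by positivity) (by positivity)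
      _ = y ^ (-(b + 1)) := by rw [← rpow_neg_one, ← rpow_add hy]; ring_nf
      _ ≤ _ := le_add_of_nonneg_left (by positivity)

theorem sq_add_rpow_le {ε b c t u : ℝ} (hε : 0 < ε) (hc : |c| ≤ b) (hu : 1 ≤ u)
    (ht : |t| ≤ u) : (t ^ 2 + ε) ^ c ≤ ((1 + ε) ^ b + ε ^ (-b)) * u ^ (2 * b) := by
  have hb : 0 ≤ b := (abs_nonneg c).trans hc
  have hpos : 0 < t ^ 2 + ε := by positivity
  have ht2 : t ^ 2 ≤ u ^ 2 := by nlinarith [sq_abs t, abs_nonneg t]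
  have hu2 : 1 ≤ u ^ 2 := one_le_pow₀ hu
  have hupper : (t ^ 2 + ε) ^ b ≤ (1 + ε) ^ b * u ^ (2 * b) := by
    calc (t ^ 2 + ε) ^ b ≤ ((1 + ε) * u ^ 2) ^ b :=
          rpow_le_rpow hpos.le (by nlinarith [mul_le_mul_of_nonneg_left hu2 hε.le]) hb
      _ = (1 + ε) ^ b * u ^ (2 * b) := by
        rw [mul_rpow (by positivity) (by positivity), ← rpow_natCast_mul (by positivity)]
        norm_num
  have hlower : (t ^ 2 + ε) ^ (-b) ≤ ε ^ (-b) * u ^ (2 * b) :=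
    (rpow_le_rpow_of_nonpos hε (by linarith [sq_nonneg t]) (by linarith)).trans
      (le_mul_of_one_le_right (by positivity) (one_le_rpow hu (by positivity)))
  calc (t ^ 2 + ε) ^ c ≤ (t ^ 2 + ε) ^ b + (t ^ 2 + ε) ^ (-b) := rpow_le_rpow_add_rpow_neg hpos hc
    _ ≤ _ := by linarith

theorem sq_add_rpow_neg_mul_abs_rpow_le {a s t ε : ℝ} (hs : 0 ≤ s) (ht : t ≠ 0)
    (hε : ε ∈ Set.Icc (0 : ℝ) 1) :
    (t ^ 2 + ε) ^ (-a) * |t| ^ (2 * s) ≤ |t| ^ (2 * s - 2 * a) + (1 + |t|) ^ (2 * s + 2 * |a|) := by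
  have ht2 : 0 < t ^ 2 := by positivity
  have habs : 0 < |t| := abs_pos.mpr ht
  rcases le_total 0 a with ha | ha
  · refine le_add_of_le_of_nonneg ?_ (by positivity)
    calc (t ^ 2 + ε) ^ (-a) * |t| ^ (2 * s) ≤ (t ^ 2) ^ (-a) * |t| ^ (2 * s) :=
          mul_le_mul_of_nonneg_right
            (rpow_le_rpow_of_nonpos ht2 (by linarith [hε.1]) (by linarith)) (by positivity)
      _ = |t| ^ (2 * s - 2 * a) := by
          rw [← sq_abs t, ← rpow_natCast_mul habs.le, ← rpow_add habs]
          ring_nf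
  · refine le_add_of_nonneg_of_le (by positivity) ?_
    have hsq : t ^ 2 + ε ≤ (1 + |t|) ^ 2 := by nlinarith [hε.2, sq_abs t, abs_nonneg t]
    calc (t ^ 2 + ε) ^ (-a) * |t| ^ (2 * s) ≤ ((1 + |t|) ^ 2) ^ (-a) * (1 + |t|) ^ (2 * s) :=
          mul_le_mul (rpow_le_rpow (by linarith [hε.1, sq_nonneg t]) hsq (by linarith))
            (rpow_le_rpow habs.le (by linarith) (by positivity)) (by positivity) (by positivity)
      _ = (1 + |t|) ^ (2 * s + 2 * |a|) := by
          rw [← rpow_natCast_mul (by positivity), ← rpow_add (by positivity), abs_of_nonpos ha]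
          ring_nf

theorem integrable_abs_rpow_mul_one_add_abs_rpow_neg {p M : ℝ} (hp : -1 < p) (hM : p + 1 < M) :
    Integrable fun t : ℝ => |t| ^ p * (1 + |t|) ^ (-M) := by
  have h := integrable_fun_norm_addHaar (volume : Measure ℝ) (f := fun y => y ^ p * (1 + y) ^ (-M))
  simp only [Real.norm_eq_abs, Module.finrank_self, tsub_self, pow_zero, one_smul] at h
  rw [h, ← Set.Ioc_union_Ioi_eq_Ioi zero_le_one]
  refine IntegrableOn.union ?_ ?_
  · have hbase : IntegrableOn (fun y : ℝ => y ^ p) (Set.Ioc 0 1) :=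
      (intervalIntegrable_iff_integrableOn_Ioc_of_le zero_le_one).mp
        (intervalIntegral.intervalIntegrable_rpow' hp)
    refine hbase.mono' (by fun_prop) ((ae_restrict_iff' measurableSet_Ioc).mpr
      (ae_of_all _ fun y hy => ?_))
    rw [Real.norm_of_nonneg (by have := hy.1; positivity)]
    exact mul_le_of_le_one_right (rpow_nonneg hy.1.le _)
      (rpow_le_one_of_one_le_of_nonpos (by linarith [hy.1]) (by linarith))
  · have hbase : IntegrableOn (fun y : ℝ => y ^ (p - M)) (Set.Ioi 1) :=
      integrableOn_Ioi_rpow_of_lt (by linarith) one_pos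
    refine hbase.mono' (by fun_prop) ((ae_restrict_iff' measurableSet_Ioi).mpr
      (ae_of_all _ fun y hy => ?_))
    have hy0 : (0 : ℝ) < y := one_pos.trans hy
    rw [Real.norm_of_nonneg (by positivity), sub_eq_add_neg, rpow_add hy0]
    exact mul_le_mul_of_nonneg_left (rpow_le_rpow_of_nonpos hy0 (by linarith) (by linarith))
      (by positivity)

namespace SchwartzMap

variable {E F : Type*} [NormedAddCommGroup E] [NormedSpace ℝ E]
  [NormedAddCommGroup F] [NormedSpace ℝ F]

theorem exists_norm_mul_one_add_norm_rpow_le (g : 𝓢(E, F)) (D : ℝ) :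
    ∃ C, ∀ x, ‖g x‖ * (1 + ‖x‖) ^ D ≤ C := by
  refine ⟨2 ^ ⌈D⌉₊ * ((Finset.Iic (⌈D⌉₊, 0)).sup fun m => SchwartzMap.seminorm ℝ m.1 m.2) g,
    fun x => ?_⟩
  have h := one_add_le_sup_seminorm_apply (𝕜 := ℝ) (m := (⌈D⌉₊, 0)) le_rfl le_rfl g x
  rw [norm_iteratedFDeriv_zero] at h
  calc ‖g x‖ * (1 + ‖x‖) ^ D ≤ ‖g x‖ * (1 + ‖x‖) ^ (⌈D⌉₊ : ℝ) := by
        gcongr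
        · simp
        · exact Nat.le_ceil D
    _ ≤ _ := by rw [rpow_natCast, mul_comm]; exact h

theorem integrable_norm_mul_one_add_norm_rpow [MeasurableSpace E] [BorelSpace E] (g : 𝓢(E, F))
    (μ : Measure E) [μ.HasTemperateGrowth] (D : ℝ) :
    Integrable (fun x => ‖g x‖ * (1 + ‖x‖) ^ D) μ := by
  set P : ℝ := (μ.integrablePower : ℝ)
  obtain ⟨C, hC⟩ := g.exists_norm_mul_one_add_norm_rpow_le (D + P)
  have hcont : Continuous fun x => ‖g x‖ * (1 + ‖x‖) ^ D :=
    g.continuous.norm.mul ((continuous_const.add continuous_norm).rpow_const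
      fun x => Or.inl (by positivity : (0 : ℝ) < 1 + ‖x‖).ne')
  refine ((μ.integrable_pow_neg_integrablePower).const_mul C).mono'
    hcont.aestronglyMeasurable (ae_of_all _ fun x => ?_)
  have hx : 0 < 1 + ‖x‖ := by positivity
  rw [norm_of_nonneg (by positivity)]
  calc ‖g x‖ * (1 + ‖x‖) ^ D = ‖g x‖ * (1 + ‖x‖) ^ (D + P) * (1 + ‖x‖) ^ (-P) := by
        rw [mul_assoc, ← rpow_add hx]; ring_nf
    _ ≤ C * (1 + ‖x‖) ^ (-P) := mul_le_mul_of_nonneg_right (hC x) (by positivity)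

end SchwartzMap

theorem abs_apply_le_norm {ι : Type*} [Fintype ι] (x : ι → ℝ) (i : ι) : |x i| ≤ ‖x‖ := by
  simpa using norm_le_pi_norm x i

theorem one_add_norm_rpow_neg_le_prod {n : ℕ} (x : Fin n → ℝ) {M : ℝ} (hM : 0 ≤ M) :
    (1 + ‖x‖) ^ (-(n * M)) ≤ ∏ i, (1 + |x i|) ^ (-M) := by
  rw [show -((n : ℝ) * M) = -M * n by ring, rpow_mul_natCast (by positivity), ← Fin.prod_const]
  refine Finset.prod_le_prod (fun _ _ => by positivity) fun i _ => ?_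
  exact rpow_le_rpow_of_nonpos (by positivity) (by linarith [abs_apply_le_norm x i]) (by linarith)

theorem SchwartzMap.exists_norm_mul_one_add_norm_rpow_le_prod {F : Type*} [NormedAddCommGroup F]
    [NormedSpace ℝ F] {n : ℕ} (g : SchwartzMap (Fin n → ℝ) F) (D : ℝ) {M : ℝ} (hM : 0 ≤ M) :
    ∃ C, ∀ x, ‖g x‖ * (1 + ‖x‖) ^ D ≤ C * ∏ i, (1 + |x i|) ^ (-M) := by
  obtain ⟨C, hC⟩ := g.exists_norm_mul_one_add_norm_rpow_le (D + n * M)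
  have hC0 : 0 ≤ C :=
    (by positivity : 0 ≤ ‖g 0‖ * (1 + ‖(0 : Fin n → ℝ)‖) ^ (D + n * M)).trans (hC 0)
  refine ⟨C, fun x => ?_⟩
  have hx : 0 < 1 + ‖x‖ := by positivity
  calc ‖g x‖ * (1 + ‖x‖) ^ D = ‖g x‖ * (1 + ‖x‖) ^ (D + n * M) * (1 + ‖x‖) ^ (-(n * M)) := by
        rw [mul_assoc, ← rpow_add hx]; ring_nf
    _ ≤ C * ∏ i, (1 + |x i|) ^ (-M) :=
        mul_le_mul (hC x) (one_add_norm_rpow_neg_le_prod x hM) (by positivity) hC0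

theorem weightB_nonneg (n : ℕ) (k k' : ℝ) (x : Fin n → ℝ) : 0 ≤ weightB n k k' x := by
  unfold weightB
  positivity

theorem measurable_weightB (n : ℕ) (k k' : ℝ) : Measurable (weightB n k k') := by
  unfold weightB
  fun_prop

theorem weightB_le_prod_mul (n : ℕ) {k : ℝ} (hk : 0 ≤ k) (k' : ℝ) :
    ∃ D : ℝ, ∀ x : Fin n → ℝ, weightB n k k' x ≤ (∏ i, |x i| ^ (2 * k')) * (1 + ‖x‖) ^ D := by
  refine ⟨4 * k * ∑ i : Fin n, ((Finset.Ioi i).card : ℝ), fun x => ?_⟩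
  have hfactor : ∀ i j, |x i ^ 2 - x j ^ 2| ^ (2 * k) ≤ (1 + ‖x‖) ^ (4 * k) := fun i j => by
    have hi : |x i| ≤ 1 + ‖x‖ := by linarith [abs_apply_le_norm x i]
    have hj : |x j| ≤ 1 + ‖x‖ := by linarith [abs_apply_le_norm x j]
    have hsq : |x i ^ 2 - x j ^ 2| ≤ (1 + ‖x‖) ^ 2 := by
      rw [abs_sub_le_iff]
      constructor <;> nlinarith [sq_abs (x i), sq_abs (x j), abs_nonneg (x i), abs_nonneg (x j)]
    calc |x i ^ 2 - x j ^ 2| ^ (2 * k) ≤ ((1 + ‖x‖) ^ 2) ^ (2 * k) := by gcongr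
      _ = (1 + ‖x‖) ^ (4 * k) := by rw [← rpow_natCast_mul (by positivity)]; ring_nf
  unfold weightB
  gcongr
  calc ∏ i, ∏ j ∈ Finset.Ioi i, |x i ^ 2 - x j ^ 2| ^ (2 * k)
      ≤ ∏ i : Fin n, ∏ _j ∈ Finset.Ioi i, (1 + ‖x‖) ^ (4 * k) := by
        gcongr with i _ j _
        exact hfactor i j
    _ = (1 + ‖x‖) ^ (4 * k * ∑ i : Fin n, ((Finset.Ioi i).card : ℝ)) := by
        rw [Finset.mul_sum, rpow_sum_of_pos (by positivity)]
        simp only [Finset.prod_const, ← rpow_mul_natCast (by positivity : (0 : ℝ) ≤ 1 + ‖x‖)]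

theorem weightB_le (n : ℕ) {k k' : ℝ} (hk : 0 ≤ k) (hk' : 0 ≤ k') :
    ∃ D : ℝ, ∀ x : Fin n → ℝ, weightB n k k' x ≤ (1 + ‖x‖) ^ D := by
  obtain ⟨D, hD⟩ := weightB_le_prod_mul n hk k'
  refine ⟨2 * k' * n + D, fun x => (hD x).trans ?_⟩
  have hx : 0 < 1 + ‖x‖ := by positivity
  rw [rpow_add hx, rpow_mul_natCast hx.le, ← Fin.prod_const]
  gcongr with i
  linarith [abs_apply_le_norm x i]

theorem Complex.finsetProd_ofReal_cpow {ι : Type*} (s : Finset ι) {f : ι → ℝ}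
    (hf : ∀ i ∈ s, 0 ≤ f i) (z : ℂ) :
    ∏ i ∈ s, (f i : ℂ) ^ z = ((∏ i ∈ s, f i : ℝ) : ℂ) ^ z := by
  induction s using Finset.cons_induction with
  | empty => simp
  | cons a s ha ih =>
    simp only [Finset.mem_cons, forall_eq_or_imp] at hf
    rw [Finset.prod_cons, Finset.prod_cons, Complex.ofReal_mul,
      Complex.mul_cpow_ofReal_nonneg hf.1 (Finset.prod_nonneg hf.2), ih hf.2]

theorem rpow_prod_sq_add_le {n : ℕ} {ε b c : ℝ} (hε : 0 < ε) (hc : |c| ≤ b) (x : Fin n → ℝ) :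
    (∏ i, (x i ^ 2 + ε)) ^ c ≤ ((1 + ε) ^ b + ε ^ (-b)) ^ n * (1 + ‖x‖) ^ (2 * b * n) := by
  have hx : 0 < 1 + ‖x‖ := by positivity
  rw [← finsetProd_rpow _ _ fun i _ => by positivity, rpow_mul_natCast hx.le, ← mul_pow,
    ← Fin.prod_const]
  gcongr with i
  exact sq_add_rpow_le hε hc (by simp) (by linarith [abs_apply_le_norm x i])

def zetaIntegrand (n : ℕ) (k k' : ℝ) (g : SchwartzMap (Fin n → ℝ) ℂ) (ε : ℝ) (α : ℂ)
    (x : Fin n → ℝ) : ℂ :=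
  g x * (∏ i, ((x i ^ 2 + ε : ℝ) : ℂ) ^ (-α)) * ((weightB n k k' x : ℝ) : ℂ)

theorem ae_forall_ne_zero (n : ℕ) : ∀ᵐ x : Fin n → ℝ, ∀ i, x i ≠ 0 := by
  rw [ae_all_iff]
  intro i
  rw [volume_pi]
  exact Measure.ae_eval_ne _ i 0

section zetaIntegrand

variable {n : ℕ} {k k' : ℝ} (g : SchwartzMap (Fin n → ℝ) ℂ)

theorem zetaIntegrand_zero (α : ℂ) :
    zetaIntegrand n k k' g 0 α = fun x =>
      g x * (∏ i, ((x i ^ 2 : ℝ) : ℂ) ^ (-α)) * ((weightB n k k' x : ℝ) : ℂ) := by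
  funext x
  simp only [zetaIntegrand, add_zero]

theorem measurable_zetaIntegrand (ε : ℝ) (α : ℂ) : Measurable (zetaIntegrand n k k' g ε α) := by
  have := measurable_weightB n k k'
  have := g.continuous.measurable
  unfold zetaIntegrand
  fun_prop

theorem norm_zetaIntegrand {ε : ℝ} {α : ℂ} {x : Fin n → ℝ} (hx : ∀ i, 0 < x i ^ 2 + ε) :
    ‖zetaIntegrand n k k' g ε α x‖ = ‖g x‖ * (∏ i, (x i ^ 2 + ε) ^ (-α.re)) * weightB n k k' x := by
  simp only [zetaIntegrand, norm_mul, norm_prod, Complex.norm_real,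
    norm_of_nonneg (weightB_nonneg n k k' x), Complex.norm_cpow_eq_rpow_re_of_pos (hx _),
    Complex.neg_re]

theorem zetaIntegrand_eq_cpow_prod {ε : ℝ} (hε : 0 ≤ ε) (α : ℂ) (x : Fin n → ℝ) :
    zetaIntegrand n k k' g ε α x =
      g x * ((∏ i, (x i ^ 2 + ε) : ℝ) : ℂ) ^ (-α) * ((weightB n k k' x : ℝ) : ℂ) := by
  rw [zetaIntegrand, Complex.finsetProd_ofReal_cpow _ fun i _ => by positivity]

theorem integrable_norm_mul_rpow_prod_sq_add_mul_weightB (hk : 0 ≤ k) (hk' : 0 ≤ k') {ε : ℝ}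
    (hε : 0 < ε) (b : ℝ) :
    Integrable fun x : Fin n → ℝ => ‖g x‖ *
      ((∏ i, (x i ^ 2 + ε)) ^ b + (∏ i, (x i ^ 2 + ε)) ^ (-b)) * weightB n k k' x := by
  obtain ⟨D, hD⟩ := weightB_le n hk hk'
  set A := ((1 + ε) ^ |b| + ε ^ (-|b|)) ^ n
  have := measurable_weightB n k k'
  have := g.continuous.measurable
  have hdom := g.integrable_norm_mul_one_add_norm_rpow volume (2 * |b| * n + D)
  refine (hdom.const_mul (2 * A)).mono' (by fun_prop) (ae_of_all _ fun x => ?_)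
  have hx : 0 < 1 + ‖x‖ := by positivity
  have hY := rpow_prod_sq_add_le hε (le_refl |b|) x
  have hY' := rpow_prod_sq_add_le hε (abs_neg b).le x
  rw [norm_of_nonneg (mul_nonneg (by positivity) (weightB_nonneg n k k' x)), rpow_add hx]
  calc ‖g x‖ * ((∏ i, (x i ^ 2 + ε)) ^ b + (∏ i, (x i ^ 2 + ε)) ^ (-b)) * weightB n k k' x
      ≤ ‖g x‖ * (2 * A * (1 + ‖x‖) ^ (2 * |b| * n)) * (1 + ‖x‖) ^ D := by
        gcongr
        · exact weightB_nonneg n k k' x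
        · linarith
        · exact hD x
    _ = _ := by ring

theorem integrable_zetaIntegrand (hk : 0 ≤ k) (hk' : 0 ≤ k') {ε : ℝ} (hε : 0 < ε) (α : ℂ) :
    Integrable (zetaIntegrand n k k' g ε α) := by
  refine (integrable_norm_mul_rpow_prod_sq_add_mul_weightB g hk hk' hε α.re).mono'
    (measurable_zetaIntegrand g ε α).aestronglyMeasurable (ae_of_all _ fun x => ?_)
  have hx : ∀ i, 0 < x i ^ 2 + ε := fun i => by positivity
  rw [norm_zetaIntegrand g hx, finsetProd_rpow _ _ fun i _ => (hx i).le]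
  gcongr
  · exact weightB_nonneg n k k' x
  · exact le_add_of_nonneg_left (by positivity)

theorem hasDerivAt_zetaIntegrand {ε : ℝ} (hε : 0 < ε) (x : Fin n → ℝ) (β : ℂ) :
    HasDerivAt (fun γ => zetaIntegrand n k k' g ε γ x)
      (g x * (((∏ i, (x i ^ 2 + ε) : ℝ) : ℂ) ^ (-β) * Complex.log (∏ i, (x i ^ 2 + ε) : ℝ) * (-1)) *
        ((weightB n k k' x : ℝ) : ℂ)) β := by
  have hY : ((∏ i, (x i ^ 2 + ε) : ℝ) : ℂ) ≠ 0 :=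
    Complex.ofReal_ne_zero.mpr (Finset.prod_pos fun i _ => by positivity).ne'
  simp only [zetaIntegrand_eq_cpow_prod g hε.le]
  exact (((hasDerivAt_id β).neg.const_cpow (Or.inl hY)).const_mul (g x)).mul_const _

theorem differentiable_regZeta (hk : 0 ≤ k) (hk' : 0 ≤ k') {ε : ℝ} (hε : 0 < ε) :
    Differentiable ℂ (regZeta n k k' g ε) := by
  intro α₀
  set b := |α₀.re| + 1
  have hY : ∀ x : Fin n → ℝ, 0 < ∏ i, (x i ^ 2 + ε) := fun x =>
    Finset.prod_pos fun i _ => by positivity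
  have hbound : ∀ x : Fin n → ℝ, ∀ β ∈ Metric.ball α₀ 1,
      ‖g x * (((∏ i, (x i ^ 2 + ε) : ℝ) : ℂ) ^ (-β) * Complex.log (∏ i, (x i ^ 2 + ε) : ℝ) * (-1)) *
        ((weightB n k k' x : ℝ) : ℂ)‖ ≤ ‖g x‖ *
          ((∏ i, (x i ^ 2 + ε)) ^ (b + 1) + (∏ i, (x i ^ 2 + ε)) ^ (-(b + 1))) *
            weightB n k k' x := fun x β hβ => by
    have hβb : |(-β).re| ≤ b := by
      rw [Complex.neg_re, abs_neg]
      have := Complex.abs_re_le_norm (β - α₀)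
      rw [Complex.sub_re] at this
      linarith [abs_sub_abs_le_abs_sub β.re α₀.re, mem_ball_iff_norm.mp hβ]
    rw [norm_mul, norm_mul, norm_mul, norm_mul, norm_neg, norm_one, mul_one,
      Complex.norm_cpow_eq_rpow_re_of_pos (hY x), ← Complex.ofReal_log (hY x).le,
      Complex.norm_real, Complex.norm_real, norm_of_nonneg (weightB_nonneg n k k' x),
      Real.norm_eq_abs, mul_comm (_ ^ _)]
    gcongr
    · exact weightB_nonneg n k k' x
    · exact abs_log_mul_rpow_le (hY x) hβb
  have := measurable_weightB n k k'
  have := g.continuous.measurable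
  exact (hasDerivAt_integral_of_dominated_loc_of_deriv_le (Metric.ball_mem_nhds α₀ one_pos)
    (Eventually.of_forall fun β => (measurable_zetaIntegrand g ε β).aestronglyMeasurable)
    (integrable_zetaIntegrand g hk hk' hε α₀) (by fun_prop) (ae_of_all _ hbound)
    (integrable_norm_mul_rpow_prod_sq_add_mul_weightB g hk hk' hε (b + 1))
    (ae_of_all _ fun x β _ => hasDerivAt_zetaIntegrand g hε x β)).2.differentiableAt

theorem exists_integrable_bound_zetaIntegrand (hk : 0 ≤ k) (hk' : 0 ≤ k') {α : ℂ}
    (hα : α.re < k' + 1 / 2) :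
    ∃ bound : (Fin n → ℝ) → ℝ, Integrable bound ∧ ∀ ε ∈ Set.Icc (0 : ℝ) 1,
      ∀ x : Fin n → ℝ, (∀ i, x i ≠ 0) → ‖zetaIntegrand n k k' g ε α x‖ ≤ bound x := by
  set p := 2 * k' - 2 * α.re
  set Q := 2 * k' + 2 * |α.re|
  set M := max p Q + 2
  have hpM : p + 1 < M := by linarith [le_max_left p Q]
  have hQM : Q + 1 < M := by linarith [le_max_right p Q]
  have hφ : Integrable fun t : ℝ => (1 + |t|) ^ (-M) * (|t| ^ p + (1 + |t|) ^ Q) := by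
    have h1 := integrable_abs_rpow_mul_one_add_abs_rpow_neg (by linarith : -1 < p) hpM
    have h2 : Integrable fun t : ℝ => (1 + ‖t‖) ^ (-(M - Q)) :=
      integrable_one_add_norm (by simp only [Module.finrank_self]; push_cast; linarith)
    refine (h1.add h2).congr (ae_of_all _ fun t => ?_)
    simp only [Pi.add_apply, Real.norm_eq_abs]
    rw [mul_add, ← rpow_add (by positivity)]
    ring_nf
  obtain ⟨D, hD⟩ := weightB_le_prod_mul n hk k'
  obtain ⟨C, hC⟩ := g.exists_norm_mul_one_add_norm_rpow_le_prod D (M := M) (by positivity)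
  refine ⟨fun x => C * ∏ i, (1 + |x i|) ^ (-M) * (|x i| ^ p + (1 + |x i|) ^ Q),
    (Integrable.fintype_prod (f := fun _ => _) fun _ => hφ).const_mul C, fun ε hε x hx => ?_⟩
  have hpos : ∀ i, 0 < x i ^ 2 + ε := fun i => by have := hx i; have := hε.1; positivity
  have hfactor : ∀ i, 0 ≤ (x i ^ 2 + ε) ^ (-α.re) * |x i| ^ (2 * k') :=
    fun i => mul_nonneg (rpow_nonneg (hpos i).le _) (by positivity)
  rw [norm_zetaIntegrand g hpos]
  calc ‖g x‖ * (∏ i, (x i ^ 2 + ε) ^ (-α.re)) * weightB n k k' x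
      ≤ ‖g x‖ * (∏ i, (x i ^ 2 + ε) ^ (-α.re)) * ((∏ i, |x i| ^ (2 * k')) * (1 + ‖x‖) ^ D) :=
        mul_le_mul_of_nonneg_left (hD x)
          (mul_nonneg (norm_nonneg _) (Finset.prod_nonneg fun i _ => rpow_nonneg (hpos i).le _))
    _ = (‖g x‖ * (1 + ‖x‖) ^ D) * ∏ i, (x i ^ 2 + ε) ^ (-α.re) * |x i| ^ (2 * k') := by
        rw [Finset.prod_mul_distrib]; ring
    _ ≤ (C * ∏ i, (1 + |x i|) ^ (-M)) * ∏ i, (|x i| ^ p + (1 + |x i|) ^ Q) :=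
        mul_le_mul (hC x) (Finset.prod_le_prod (fun i _ => hfactor i)
          fun i _ => sq_add_rpow_neg_mul_abs_rpow_le hk' (hx i) hε)
          (Finset.prod_nonneg fun i _ => hfactor i)
          ((by positivity : 0 ≤ ‖g x‖ * (1 + ‖x‖) ^ D).trans (hC x))
    _ = _ := by rw [mul_assoc, ← Finset.prod_mul_distrib]

theorem tendsto_zetaIntegrand (α : ℂ) {x : Fin n → ℝ} (hx : ∀ i, x i ≠ 0) :
    Tendsto (fun ε => zetaIntegrand n k k' g ε α x) (𝓝 0) (𝓝 (zetaIntegrand n k k' g 0 α x)) := by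
  refine ((tendsto_finsetProd _ fun i _ => ?_).const_mul (g x)).mul_const _
  have hpos : 0 < x i ^ 2 + 0 := by have := hx i; positivity
  have hinner : ContinuousAt (fun ε : ℝ => ((x i ^ 2 + ε : ℝ) : ℂ)) 0 := by fun_prop
  exact (hinner.cpow continuousAt_const (Complex.ofReal_mem_slitPlane.mpr hpos)).tendsto

theorem integrable_zetaIntegrand_zero (hk : 0 ≤ k) (hk' : 0 ≤ k') {α : ℂ}
    (hα : α.re < k' + 1 / 2) : Integrable (zetaIntegrand n k k' g 0 α) := by
  obtain ⟨bound, hbound, hle⟩ := exists_integrable_bound_zetaIntegrand g hk hk' hα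
  exact hbound.mono' (measurable_zetaIntegrand g 0 α).aestronglyMeasurable
    ((ae_forall_ne_zero n).mono fun x hx => hle 0 ⟨le_rfl, zero_le_one⟩ x hx)

theorem tendsto_regZeta (hk : 0 ≤ k) (hk' : 0 ≤ k') {α : ℂ} (hα : α.re < k' + 1 / 2) :
    Tendsto (fun ε => regZeta n k k' g ε α) (𝓝[>] 0) (𝓝 (∫ x, zetaIntegrand n k k' g 0 α x)) := by
  obtain ⟨bound, hbound, hle⟩ := exists_integrable_bound_zetaIntegrand g hk hk' hα
  refine tendsto_integral_filter_of_dominated_convergence bound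
    (Eventually.of_forall fun ε => (measurable_zetaIntegrand g ε α).aestronglyMeasurable) ?_ hbound
    ((ae_forall_ne_zero n).mono fun x hx =>
      (tendsto_zetaIntegrand g α hx).mono_left nhdsWithin_le_nhds)
  filter_upwards [Ioc_mem_nhdsGT (zero_lt_one' ℝ)] with ε hε
  exact (ae_forall_ne_zero n).mono fun x hx => hle ε ⟨hε.1.le, hε.2⟩ x hx

end zetaIntegrand

theorem regularized_zeta_limit_general
    (n : ℕ) (k : ℝ) (hk : 0 ≤ k) (k' : ℝ) (hk' : 0 < k')
    (g : SchwartzMap (Fin n → ℝ) ℂ) :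
    (∀ ε : ℝ, 0 < ε →
      (∀ α : ℂ, Integrable (fun x : Fin n → ℝ =>
        g x * (∏ i, ((x i ^ 2 + ε : ℝ) : ℂ) ^ (-α)) *
          ((weightB n k k' x : ℝ) : ℂ))) ∧
      Differentiable ℂ (fun α => regZeta n k k' g ε α)) ∧
    (∀ α : ℂ, α.re < k' + 1 / 2 →
      Integrable (fun x : Fin n → ℝ =>
        g x * (∏ i, ((x i ^ 2 : ℝ) : ℂ) ^ (-α)) *
          ((weightB n k k' x : ℝ) : ℂ)) ∧
      Tendsto (fun ε : ℝ => regZeta n k k' g ε α)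
        (nhdsWithin 0 (Set.Ioi 0))
        (nhds (∫ x : Fin n → ℝ,
          g x * (∏ i, ((x i ^ 2 : ℝ) : ℂ) ^ (-α)) *
            ((weightB n k k' x : ℝ) : ℂ)))) := by
  refine ⟨fun ε hε => ⟨integrable_zetaIntegrand g hk hk'.le hε,
    differentiable_regZeta g hk hk'.le hε⟩, fun α hα => ?_⟩
  rw [← zetaIntegrand_zero]
  exact ⟨integrable_zetaIntegrand_zero g hk hk'.le hα, tendsto_regZeta g hk hk'.le hα⟩

/-- (a) for every `ε > 0` and `α ∈ ℂ` the regularized integral `I_ε(α)`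
converges absolutely and is entire in `α`; (b) for `Re α < k' + 1/2` the limiting
integral converges absolutely and `I_ε(α) → ∫ g(x) ∏ᵢ (xᵢ²)^{-α} ω^B(x) dx` as
`ε → 0⁺`. -/
theorem regularized_zeta_limit
    (n : ℕ) (hn : 1 ≤ n) (k : ℝ) (hk : 0 ≤ k) (k' : ℝ) (hk' : 0 < k')
    (g : SchwartzMap (Fin n → ℝ) ℂ) :
    (∀ ε : ℝ, 0 < ε →
      (∀ α : ℂ, Integrable (fun x : Fin n → ℝ =>
        g x * (∏ i, ((x i ^ 2 + ε : ℝ) : ℂ) ^ (-α)) *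
          ((weightB n k k' x : ℝ) : ℂ))) ∧
      Differentiable ℂ (fun α => regZeta n k k' g ε α)) ∧
    (∀ α : ℂ, α.re < k' + 1 / 2 →
      Integrable (fun x : Fin n → ℝ =>
        g x * (∏ i, ((x i ^ 2 : ℝ) : ℂ) ^ (-α)) *
          ((weightB n k k' x : ℝ) : ℂ)) ∧
      Tendsto (fun ε : ℝ => regZeta n k k' g ε α)
        (nhdsWithin 0 (Set.Ioi 0))
        (nhds (∫ x : Fin n → ℝ,
          g x * (∏ i, ((x i ^ 2 : ℝ) : ℂ) ^ (-α)) *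
            ((weightB n k k' x : ℝ) : ℂ)))) :=
  regularized_zeta_limit_general n k hk k' hk' g
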